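/- arXiv:1202.4408 — 3 statements merged into one kernel-verified Lean document; each statement's English description precedes it below -/
import Mathlib

section
/- Let A be a commutative complete Noetherian local ring with maximal ideal m and residue field k = A/m, let G be a group and d ≥ 1, and let ρ, ρ' : G → GL_d(A) be group homomorphisms with tr(ρ(g)) = tr(ρ'(g)) for all g ∈ G. If the reduction ρ̄ : G → GL_d(k) of ρ modulo m is absolutely irreducible, then ρ and ρ' are conjugate, i.e. there exists M ∈ GL_d(A) such that ρ'(g) = M ρ(g) M^{-1} for all g ∈ G. -/
/-!
Extend `ρ` and `ρ'` to algebra maps `Φ, Φ' : A[G] → Mₙ(A)`; they have the same trace. Since the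
trace pairing on matrices is perfect, `tr ∘ Φ = tr ∘ Φ'` together with surjectivity of `Φ` forces
`ker Φ' ≤ ker Φ`. Absolute irreducibility says that the reduction `Φ̄` is surjective; over the
residue field the kernel inclusion then makes `Φ̄'` surjective by counting dimensions, and
Nakayama lifts both surjectivities to `A`. Hence `ker Φ = ker Φ'`, and `Φ' ∘ Φ⁻¹` is an
`A`-algebra endomorphism of `Mₙ(A)`. Over a local ring every such endomorphism is conjugation by an
invertible matrix (Skolem–Noether), which gives the conjugating matrix.
-/

open Matrix IsLocalRing

section TracePairing

variable {n : Type*} [Fintype n] [DecidableEq n]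

theorem Matrix.ker_le_ker_of_trace_eq {R B : Type*} [CommRing R] [Ring B] [Algebra R B]
    {Φ Φ' : B →ₐ[R] Matrix n n R} (hΦ : Function.Surjective Φ)
    (htr : ∀ b, trace (Φ b) = trace (Φ' b)) : RingHom.ker Φ' ≤ RingHom.ker Φ := by
  intro x hx
  rw [RingHom.mem_ker] at hx ⊢
  refine ext_iff_trace_mul_right.mpr fun y => ?_
  obtain ⟨y, rfl⟩ := hΦ y
  rw [← map_mul, htr, map_mul, hx, zero_mul, zero_mul]

theorem LinearMap.surjective_of_ker_le_ker {K M V : Type*} [Field K] [AddCommGroup M]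
    [Module K M] [AddCommGroup V] [Module K V] [FiniteDimensional K V] {φ ψ : M →ₗ[K] V}
    (hφ : Function.Surjective φ) (h : ker ψ ≤ ker φ) : Function.Surjective ψ := by
  have hφψ : Function.Surjective ((ker ψ).liftQ φ h) := fun v => by
    obtain ⟨x, rfl⟩ := hφ v
    exact ⟨Submodule.Quotient.mk x, rfl⟩
  have := ψ.quotKerEquivRange.symm.finiteDimensional
  rw [← range_eq_top]
  refine Submodule.eq_top_of_finrank_eq ((Submodule.finrank_le _).antisymm ?_)
  calc Module.finrank K V = Module.finrank K (range ((ker ψ).liftQ φ h)) := by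
        rw [range_eq_top.mpr hφψ, finrank_top]
    _ ≤ Module.finrank K (M ⧸ ker ψ) := finrank_range_le _
    _ = Module.finrank K (range ψ) := ψ.quotKerEquivRange.finrank_eq

theorem Matrix.surjective_of_trace_eq {K B : Type*} [Field K] [Ring B] [Algebra K B]
    {Φ Φ' : B →ₐ[K] Matrix n n K} (hΦ : Function.Surjective Φ)
    (htr : ∀ b, trace (Φ b) = trace (Φ' b)) : Function.Surjective Φ' :=
  LinearMap.surjective_of_ker_le_ker (φ := Φ.toLinearMap) (ψ := Φ'.toLinearMap) hΦ
    fun _ => (ker_le_ker_of_trace_eq hΦ htr ·)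

end TracePairing

section Nakayama

variable {A n : Type*} [CommRing A] [Fintype n] [DecidableEq n]

theorem Matrix.mem_smul_top_of_forall_mem {I : Ideal A} {X : Matrix n n A}
    (h : ∀ i j, X i j ∈ I) : X ∈ I • (⊤ : Submodule A (Matrix n n A)) := by
  rw [matrix_eq_sum_single X]
  refine Submodule.sum_mem _ fun i _ => Submodule.sum_mem _ fun j _ => ?_
  rw [← mul_one (X i j), ← smul_eq_mul, ← smul_single]
  exact Submodule.smul_mem_smul (h i j) trivial

theorem Matrix.surjective_of_surjective_map_residue [IsLocalRing A] {M : Type*} [AddCommGroup M]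
    [Module A M] (φ : M →ₗ[A] Matrix n n A)
    (h : Function.Surjective fun x => (φ x).map (residue A)) : Function.Surjective φ := by
  rw [← LinearMap.range_eq_top, ← top_le_iff]
  refine Submodule.le_of_le_smul_of_le_jacobson_bot Module.Finite.fg_top
    (jacobson_eq_maximalIdeal ⊥ bot_ne_top).ge fun X _ => ?_
  obtain ⟨x, hx⟩ := h (X.map (residue A))
  rw [← add_sub_cancel (φ x) X]
  refine Submodule.add_mem_sup (LinearMap.mem_range_self φ x)
    (mem_smul_top_of_forall_mem fun i j => ?_)
  rw [← residue_eq_zero_iff, sub_apply, map_sub, sub_eq_zero]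
  exact (congr_fun₂ hx i j).symm

end Nakayama

namespace MonoidAlgebra

variable {M : Type*} [Monoid M]

theorem lift_surjective_of_adjoin_range_eq_top {R B : Type*} [CommSemiring R] [Semiring B]
    [Algebra R B] {F : M →* B} (h : Algebra.adjoin R (Set.range F) = ⊤) :
    Function.Surjective (lift R B M F) := by
  rw [← AlgHom.range_eq_top, eq_top_iff, ← h, Algebra.adjoin_le_iff]
  rintro _ ⟨m, rfl⟩
  exact ⟨of R M m, lift_of F m⟩

variable {R n : Type*} [CommRing R] [Fintype n] [DecidableEq n]

theorem trace_lift_eq_of_trace_eq {F F' : M →* Matrix n n R}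
    (h : ∀ m, trace (F m) = trace (F' m)) (x : MonoidAlgebra R M) :
    trace (lift R _ M F x) = trace (lift R _ M F' x) := by
  induction x using induction_linear with
  | zero => simp
  | add x y hx hy => simp [hx, hy]
  | single m r => simp [h]

theorem lift_surjective_of_lift_residue_surjective [IsLocalRing R] {F : M →* Matrix n n R}
    (h : Function.Surjective
      (lift (ResidueField R) _ M ((residue R).mapMatrix.toMonoidHom.comp F))) :
    Function.Surjective (lift R _ M F) := by
  have hmap : ∀ x, (lift R _ M F x).map (residue R) =
      lift (ResidueField R) _ M ((residue R).mapMatrix.toMonoidHom.comp F)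
        (map (residue R) x) := by
    intro x
    induction x using induction_linear with
    | zero => simp
    | add x y hx hy =>
      rw [map_add, Matrix.map_add _ (map_add _), hx, hy, MonoidAlgebra.map_add, map_add]
    | single m r => ext i j; simp
  refine surjective_of_surjective_map_residue (lift R _ M F).toLinearMap fun X => ?_
  obtain ⟨y, rfl⟩ := h X
  obtain ⟨x, rfl⟩ := map_surjective (residue R : R →+ ResidueField R) residue_surjective y
  exact ⟨x, hmap x⟩

end MonoidAlgebra

theorem AlgHom.exists_apply_eq_of_ker_le {R B C D : Type*} [CommRing R] [Ring B] [Ring C]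
    [Semiring D] [Algebra R B] [Algebra R C] [Algebra R D] {Φ : B →ₐ[R] C}
    (hΦ : Function.Surjective Φ) {Φ' : B →ₐ[R] D} (h : RingHom.ker Φ ≤ RingHom.ker Φ') :
    ∃ f : C →ₐ[R] D, ∀ x, f (Φ x) = Φ' x :=
  ⟨(Ideal.Quotient.liftₐ _ Φ' h).comp (Ideal.quotientKerAlgEquivOfSurjective hΦ).symm.toAlgHom,
    fun x => by simp; rfl⟩

namespace Matrix

variable {A n : Type*} [CommRing A] [Fintype n] [DecidableEq n]

theorem single_one_mul_single_one (i j k l : n) :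
    (single i j 1 : Matrix n n A) * single k l 1 = if j = k then single i l 1 else 0 := by
  split_ifs with h
  · rw [h, single_mul_single_same, one_mul]
  · exact single_mul_single_of_ne (h := h) ..

section MatrixUnits

variable (f : Matrix n n A →ₐ[A] Matrix n n A)

theorem algHom_single_mul_single (i j k l : n) :
    f (single i j 1) * f (single k l 1) = if j = k then f (single i l 1) else 0 := by
  rw [← map_mul, single_one_mul_single_one]
  split_ifs <;> simp

theorem exists_isUnit_algHom_single_apply [IsLocalRing A] [Nonempty n] :
    ∃ o a, IsUnit (f (single o o 1) a a) := by
  obtain ⟨a⟩ := ‹Nonempty n›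
  have hsum : ∑ o, f (single o o 1) a a = 1 := by
    rw [← Matrix.sum_apply, ← map_sum, sum_single_one, map_one, one_apply_eq]
  obtain ⟨o, -, ho⟩ := IsLocalRing.exists_of_isUnit_sum (hsum ▸ isUnit_one)
  exact ⟨o, a, ho⟩

variable (o a : n)

theorem algHom_apply_mul_sum_mul_single (x : Matrix n n A) :
    f x * ∑ c, f (single c o 1) * single a c 1 = (∑ c, f (single c o 1) * single a c 1) * x := by
  induction x using Matrix.induction_on' with
  | h_zero => simp
  | h_add p q hp hq => rw [map_add, add_mul, mul_add, hp, hq]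
  | h_std_basis i j r =>
    have hsingle : single i j r = r • single i j (1 : A) := by
      rw [smul_single, smul_eq_mul, mul_one]
    rw [hsingle, map_smul, smul_mul_assoc, mul_smul_comm, Finset.mul_sum, Finset.sum_mul]
    simp_rw [← mul_assoc (f _) (f _), algHom_single_mul_single, mul_assoc,
      single_one_mul_single_one]
    simp

theorem sum_single_mul_mul_sum_mul_single :
    (∑ i, single i a 1 * f (single o i 1)) * ∑ c, f (single c o 1) * single a c 1 =
      f (single o o 1) a a • 1 := by
  simp_rw [Finset.sum_mul, Finset.mul_sum, mul_assoc, ← mul_assoc (f _) (f _),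
    algHom_single_mul_single, ← mul_assoc]
  simp [single_mul_mul_single, sum_single_eq_diagonal, smul_one_eq_diagonal]

end MatrixUnits

/-- Skolem–Noether over a local ring. The `c`-th column of the conjugating matrix is the `a`-th
column of `f (single c o 1)`, for indices `o, a` making the entry `(a, a)` of `f (single o o 1)` a
unit; that unit is what makes the matrix invertible. -/
theorem exists_algHom_apply_eq_conj [IsLocalRing A] (f : Matrix n n A →ₐ[A] Matrix n n A) :
    ∃ P : GL n A, ∀ x, f x = P * x * (P⁻¹ : GL n A) := by
  rcases isEmpty_or_nonempty n with hn | hn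
  · exact ⟨1, fun x => Subsingleton.elim _ _⟩
  obtain ⟨o, a, hu⟩ := exists_isUnit_algHom_single_apply f
  set P := ∑ c, f (single c o 1) * single a c 1
  have hleft : ((hu.unit⁻¹ : Aˣ) : A) • (∑ i, single i a 1 * f (single o i 1)) * P = 1 := by
    rw [smul_mul_assoc, sum_single_mul_mul_sum_mul_single, smul_smul, hu.val_inv_mul, one_smul]
  let := invertibleOfLeftInverse P _ hleft
  refine ⟨unitOfInvertible P, fun x => ?_⟩
  rw [Units.eq_mul_inv_iff_mul_eq]
  exact algHom_apply_mul_sum_mul_single f o a x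

theorem exists_conj_of_trace_eq [IsLocalRing A] {G : Type*} [Monoid G]
    {ρ ρ' : G →* Matrix n n A} (htr : ∀ g, trace (ρ g) = trace (ρ' g))
    (habs : Algebra.adjoin (ResidueField A)
      (Set.range ((residue A).mapMatrix.toMonoidHom.comp ρ)) = ⊤) :
    ∃ P : GL n A, ∀ g, ρ' g = P * ρ g * (P⁻¹ : GL n A) := by
  have htr_res : ∀ g, trace ((residue A).mapMatrix.toMonoidHom.comp ρ g) =
      trace ((residue A).mapMatrix.toMonoidHom.comp ρ' g) := fun g => by
    simp [← AddMonoidHom.map_trace, htr]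
  have hres := MonoidAlgebra.lift_surjective_of_adjoin_range_eq_top habs
  have hres' := surjective_of_trace_eq hres (MonoidAlgebra.trace_lift_eq_of_trace_eq htr_res)
  obtain ⟨f, hf⟩ := AlgHom.exists_apply_eq_of_ker_le
    (MonoidAlgebra.lift_surjective_of_lift_residue_surjective hres)
    (ker_le_ker_of_trace_eq (MonoidAlgebra.lift_surjective_of_lift_residue_surjective hres')
      fun x => (MonoidAlgebra.trace_lift_eq_of_trace_eq htr x).symm)
  obtain ⟨P, hP⟩ := exists_algHom_apply_eq_conj f
  refine ⟨P, fun g => ?_⟩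
  rw [← hP, ← MonoidAlgebra.lift_of (R := A) ρ' g, ← hf, MonoidAlgebra.lift_of]

end Matrix

theorem representations_with_equal_trace_are_conjugate_of_residually_absolutely_irreducible_general
    (A : Type*) [CommRing A] [IsLocalRing A]
    (G : Type*) [Group G] (d : ℕ)
    (ρ ρ' : G →* Matrix.GeneralLinearGroup (Fin d) A)
    (htr : ∀ g : G, Matrix.trace (ρ g : Matrix (Fin d) (Fin d) A) =
      Matrix.trace (ρ' g : Matrix (Fin d) (Fin d) A))
    (habs : Algebra.adjoin (IsLocalRing.ResidueField A)
      (Set.range fun g : G =>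
        (ρ g : Matrix (Fin d) (Fin d) A).map (IsLocalRing.residue A)) = ⊤) :
    ∃ M : Matrix.GeneralLinearGroup (Fin d) A, ∀ g : G, ρ' g = M * ρ g * M⁻¹ := by
  obtain ⟨M, hM⟩ := Matrix.exists_conj_of_trace_eq
    (ρ := (Units.coeHom _).comp ρ) (ρ' := (Units.coeHom _).comp ρ') htr habs
  exact ⟨M, fun g => Units.ext (hM g)⟩

/-- Two representations of a group over a complete Noetherian local ring with the same trace,
one of which has absolutely irreducible residual reduction, are conjugate. -/
theorem representations_with_equal_trace_are_conjugate_of_residually_absolutely_irreducible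
    (A : Type*) [CommRing A] [IsLocalRing A] [IsNoetherianRing A]
    [IsAdicComplete (IsLocalRing.maximalIdeal A) A]
    (G : Type*) [Group G] (d : ℕ) (hd : 1 ≤ d)
    (ρ ρ' : G →* Matrix.GeneralLinearGroup (Fin d) A)
    (htr : ∀ g : G, Matrix.trace (ρ g : Matrix (Fin d) (Fin d) A) =
      Matrix.trace (ρ' g : Matrix (Fin d) (Fin d) A))
    (habs : Algebra.adjoin (IsLocalRing.ResidueField A)
      (Set.range fun g : G =>
        (ρ g : Matrix (Fin d) (Fin d) A).map (IsLocalRing.residue A)) = ⊤) :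
    ∃ M : Matrix.GeneralLinearGroup (Fin d) A, ∀ g : G, ρ' g = M * ρ g * M⁻¹ :=
  representations_with_equal_trace_are_conjugate_of_residually_absolutely_irreducible_general A G d
    ρ ρ' htr habs
end

section
/- Let X be a Noetherian scheme, H a group, d ≥ 1, and let ρ : H → GL_d(Γ(X, O_X)) be a group homomorphism into the invertible d×d matrices over the ring of global sections of X. For each point x ∈ X, let ρ_x : H → GL_d(κ(x)) be the homomorphism obtained by applying the canonical ring homomorphism Γ(X, O_X) → κ(x) to the residue field of x entrywise, and set r(x) = dim_{κ(x)} { v ∈ κ(x)^d : ρ_x(h)·v = v for all h ∈ H }, the dimension of the space of H-invariants in the fiber. Then the function r : X → ℕ is upper semicontinuous. -/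
/-!
Let `G` be the matrix over `Γ(X, O_X)` obtained by stacking the matrices `ρ(h) - 1` for all
`h ∈ H`. The invariants of the fiber at `x` form the kernel of the image `G_x` of `G` over
`κ(x)`, so `r(x) = d - rank G_x`. The rank of `G_x` is at least `k` exactly when some `k × k`
minor of `G` does not vanish at `x`, so `{x | rank G_x ≥ k}` is a union of basic opens `D(det)`.
As `H` may be infinite, `G` may have infinitely many rows; since `κ(x)^d` is Artinian, finitely
many rows already cut out the kernel, and for finitely many rows rank and minors are related as
usual.
-/

open AlgebraicGeometry CategoryTheory

/-- The subspace of simultaneous fixed vectors of a family of matrices acting on `Fin d → K`. -/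
def fixedVectors {K : Type*} [Field K] {d : ℕ} {H : Type*}
    (M : H → Matrix (Fin d) (Fin d) K) : Submodule K (Fin d → K) where
  carrier := {v | ∀ h : H, (M h).mulVec v = v}
  add_mem' := by
    intro v w hv hw h
    rw [Matrix.mulVec_add, hv h, hw h]
  zero_mem' := by
    intro h
    rw [Matrix.mulVec_zero]
  smul_mem' := by
    intro c v hv h
    rw [Matrix.mulVec_smul, hv h]

open Module Submodule

section RankMinors

variable {K V : Type*} [Field K] [AddCommGroup V] [Module K V]

theorem exists_linearIndependent_comp_of_le_finrank_span {ι : Type*} [Finite ι] (v : ι → V)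
    {k : ℕ} (hk : k ≤ finrank K (span K (Set.range v))) :
    ∃ s : Fin k → ι, LinearIndependent K (v ∘ s) := by
  obtain ⟨κ, a, ha, hspan, hli⟩ := exists_linearIndependent' K v
  have : Finite κ := Finite.of_injective a ha
  cases nonempty_fintype κ
  rw [← hspan, finrank_span_eq_card hli] at hk
  obtain ⟨e⟩ := Function.Embedding.nonempty_of_card_le (α := Fin k) (by simpa using hk)
  exact ⟨a ∘ e, hli.comp e e.injective⟩

namespace Matrix

variable {ι n : Type*} [Fintype n]

theorem rank_add_finrank_ker_mulVecLin (A : Matrix ι n K) :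
    A.rank + finrank K (LinearMap.ker A.mulVecLin) = Fintype.card n := by
  rw [rank, LinearMap.finrank_range_add_finrank_ker, finrank_fintype_fun_eq_card]

theorem exists_finset_ker_mulVecLin_submatrix_eq (A : Matrix ι n K) :
    ∃ s : Finset ι, LinearMap.ker (A.submatrix ((↑) : s → ι) id).mulVecLin =
      LinearMap.ker A.mulVecLin := by
  let f (i : ι) : Submodule K (n → K) := LinearMap.ker ((LinearMap.proj i).comp A.mulVecLin)
  obtain ⟨s, hs⟩ := Finset.exists_inf_le f
  refine ⟨s, le_antisymm (fun v hv => ?_) (fun v hv => ?_)⟩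
  · have hsv : v ∈ s.inf f := mem_finsetInf.mpr fun i hi =>
      LinearMap.mem_ker.mpr (congr_fun (LinearMap.mem_ker.mp hv) ⟨i, hi⟩)
    exact LinearMap.mem_ker.mpr (funext fun i => LinearMap.mem_ker.mp (hs i hsv))
  · exact LinearMap.mem_ker.mpr (funext fun i => congr_fun (LinearMap.mem_ker.mp hv) i)

theorem exists_finset_rank_submatrix_eq (A : Matrix ι n K) :
    ∃ s : Finset ι, (A.submatrix ((↑) : s → ι) id).rank = A.rank := by
  obtain ⟨s, hs⟩ := exists_finset_ker_mulVecLin_submatrix_eq A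
  refine ⟨s, ?_⟩
  have h₁ := rank_add_finrank_ker_mulVecLin (A.submatrix ((↑) : s → ι) id)
  have h₂ := rank_add_finrank_ker_mulVecLin A
  rw [hs] at h₁
  omega

theorem exists_det_submatrix_ne_zero_of_le_rank_of_finite [Finite ι] {k : ℕ} (A : Matrix ι n K)
    (h : k ≤ A.rank) : ∃ (r : Fin k → ι) (c : Fin k → n), (A.submatrix r c).det ≠ 0 := by
  rw [rank_eq_finrank_span_cols] at h
  obtain ⟨c, hc⟩ := exists_linearIndependent_comp_of_le_finrank_span A.col h
  have hN : (A.submatrix id c).rank = k := by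
    rw [rank, LinearMap.finrank_range_of_inj (mulVec_injective_iff.mpr hc), finrank_fin_fun]
  rw [rank_eq_finrank_span_row] at hN
  obtain ⟨r, hr⟩ := exists_linearIndependent_comp_of_le_finrank_span _ hN.ge
  exact ⟨r, c, ((isUnit_iff_isUnit_det _).mp (linearIndependent_rows_iff_isUnit.mp hr)).ne_zero⟩

theorem le_rank_iff_exists_det_submatrix_ne_zero {k : ℕ} (A : Matrix ι n K) :
    k ≤ A.rank ↔ ∃ (r : Fin k → ι) (c : Fin k → n), (A.submatrix r c).det ≠ 0 := by
  refine ⟨fun h => ?_, fun ⟨r, c, h⟩ => ?_⟩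
  · obtain ⟨s, hs⟩ := exists_finset_rank_submatrix_eq A
    obtain ⟨r, c, hrc⟩ := exists_det_submatrix_ne_zero_of_le_rank_of_finite _ (h.trans hs.ge)
    exact ⟨(↑) ∘ r, c, by simpa [submatrix_submatrix] using hrc⟩
  · simpa [rank_of_det_ne_zero h] using rank_submatrix_le A r c

end Matrix

end RankMinors

section FixedVectors

variable {H : Type*} {d : ℕ}

def fixedVectorsEquations {R : Type*} [Ring R] (M : H → Matrix (Fin d) (Fin d) R) :
    Matrix (H × Fin d) (Fin d) R :=
  Matrix.of fun p => (M p.1 - 1) p.2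

theorem fixedVectorsEquations_map {R S F : Type*} [Ring R] [Ring S] [FunLike F R S]
    [RingHomClass F R S] (M : H → Matrix (Fin d) (Fin d) R) (f : F) :
    (fixedVectorsEquations M).map f = fixedVectorsEquations fun h => (M h).map f := by
  ext p j
  simp [fixedVectorsEquations, Matrix.one_apply]

theorem fixedVectors_eq_ker {K : Type*} [Field K] (M : H → Matrix (Fin d) (Fin d) K) :
    fixedVectors M = LinearMap.ker (fixedVectorsEquations M).mulVecLin := by
  ext v
  have hrow (p : H × Fin d) :
      (fixedVectorsEquations M).mulVec v p = (M p.1).mulVec v p.2 - v p.2 := by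
    change (M p.1 - 1).mulVec v p.2 = _
    rw [Matrix.sub_mulVec, Matrix.one_mulVec, Pi.sub_apply]
  simp [fixedVectors, funext_iff, hrow, sub_eq_zero]

theorem finrank_fixedVectors_add_rank {K : Type*} [Field K] (M : H → Matrix (Fin d) (Fin d) K) :
    finrank K (fixedVectors M) + (fixedVectorsEquations M).rank = d := by
  rw [fixedVectors_eq_ker, add_comm, Matrix.rank_add_finrank_ker_mulVecLin, Fintype.card_fin]

end FixedVectors

theorem AlgebraicGeometry.Scheme.isOpen_setOf_le_rank_map_Γevaluation (X : Scheme)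
    {ι n : Type*} [Fintype n] (A : Matrix ι n Γ(X, ⊤)) (k : ℕ) :
    IsOpen {x : X | k ≤ (A.map (X.Γevaluation x)).rank} := by
  have hset : {x : X | k ≤ (A.map (X.Γevaluation x)).rank} =
      ⋃ (r : Fin k → ι) (c : Fin k → n), (X.basicOpen (A.submatrix r c).det : Set X) := by
    ext x
    have hdet (r : Fin k → ι) (c : Fin k → n) :
        ((A.map (X.Γevaluation x)).submatrix r c).det =
          X.Γevaluation x (A.submatrix r c).det := by
      rw [Matrix.submatrix_map, RingHom.map_det]
      rfl
    simp only [Set.mem_ofPred_eq, Set.mem_iUnion, Matrix.le_rank_iff_exists_det_submatrix_ne_zero,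
      hdet, SetLike.mem_coe]
    exact exists₂_congr fun r c => X.evaluation_ne_zero_iff_mem_basicOpen (U := ⊤) x trivial _
  rw [hset]
  exact isOpen_iUnion fun r => isOpen_iUnion fun c => (X.basicOpen _).isOpen

theorem upperSemicontinuous_finrank_fixedVectors_general
    (X : Scheme)
    (H : Type*) [Group H] (d : ℕ)
    (ρ : H →* Matrix.GeneralLinearGroup (Fin d) Γ(X, ⊤)) :
    ∀ m : ℕ, IsClosed {x : X | m ≤ Module.finrank (X.residueField x)
      (fixedVectors fun h : H =>
        (ρ h : Matrix (Fin d) (Fin d) Γ(X, ⊤)).map (X.Γevaluation x))} := by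
  intro m
  -- `r x < m ↔ d + 1 - m ≤ rank G_x` holds also for `m > d + 1`, by truncated subtraction
  rw [← isOpen_compl_iff]
  convert X.isOpen_setOf_le_rank_map_Γevaluation
    (fixedVectorsEquations fun h => (ρ h : Matrix (Fin d) (Fin d) Γ(X, ⊤))) (d + 1 - m) using 1
  ext x
  have hrank := finrank_fixedVectors_add_rank fun h : H =>
    (ρ h : Matrix (Fin d) (Fin d) Γ(X, ⊤)).map (X.Γevaluation x)
  rw [← fixedVectorsEquations_map] at hrank
  simp only [Set.mem_compl_iff, Set.mem_ofPred_eq]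
  omega

/-- For a group homomorphism `ρ : H → GL_d(Γ(X, O_X))` over a Noetherian scheme `X`, the
dimension of the space of `H`-invariants of the fiber at `x` is an upper semicontinuous
function of `x`, i.e. all the superlevel sets `{x | r x ≥ m}` are closed. -/
theorem upperSemicontinuous_finrank_fixedVectors
    (X : Scheme) [AlgebraicGeometry.IsNoetherian X]
    (H : Type*) [Group H] (d : ℕ) (hd : 1 ≤ d)
    (ρ : H →* Matrix.GeneralLinearGroup (Fin d) Γ(X, ⊤)) :
    ∀ m : ℕ, IsClosed {x : X | m ≤ Module.finrank (X.residueField x)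
      (fixedVectors fun h : H =>
        (ρ h : Matrix (Fin d) (Fin d) Γ(X, ⊤)).map (X.Γevaluation x))} :=
  upperSemicontinuous_finrank_fixedVectors_general X H d ρ
end

section
/- Let X be a scheme, H a group, d ≥ 1, and let ρ : H → GL_d(Γ(X, O_X)) be a group homomorphism into the invertible d×d matrices over the ring of global sections of X. For each point x ∈ X, let ρ_x : H → GL_d(κ(x)) be the homomorphism obtained by applying the canonical ring homomorphism Γ(X, O_X) → κ(x) to the residue field of x entrywise, and set r(x) = dim_{κ(x)} { v ∈ κ(x)^d : ρ_x(h)·v = v for all h ∈ H }. If x, y ∈ X and y lies in the closure of {x} (i.e. x specializes to y), then r(x) ≤ r(y). -/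
open AlgebraicGeometry CategoryTheory

open Module Submodule Set Matrix

namespace Matrix

variable {K : Type*} [Field K] {m n : Type*} [Fintype m] [DecidableEq m] {A : Matrix m n K}

theorem linearIndependent_row_of_isUnit_det_submatrix (c : m → n)
    (h : IsUnit (A.submatrix id c).det) : LinearIndependent K A.row :=
  (linearIndependent_rows_iff_isUnit.2 ((isUnit_iff_isUnit_det _).2 h)).of_comp
    (LinearMap.funLeft K K c)

theorem exists_isUnit_det_submatrix_of_linearIndependent_row [Fintype n]
    (hA : LinearIndependent K A.row) : ∃ c : m → n, IsUnit (A.submatrix id c).det := by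
  have hcols : finrank K (span K (range A.col)) = Fintype.card m := by
    rw [← rank_eq_finrank_span_cols, rank_eq_finrank_span_row, finrank_span_eq_card hA]
  obtain ⟨w, hw_col, -, hw_li⟩ := exists_fun_fin_finrank_span_eq K (range A.col)
  choose c hc using hw_col
  let e := Fintype.equivFinOfCardEq hcols.symm
  refine ⟨c ∘ e, (isUnit_iff_isUnit_det _).1 (linearIndependent_cols_iff_isUnit.1 ?_)⟩
  have hsub : (A.submatrix id (c ∘ e)).col = w ∘ e := funext fun i => hc (e i)
  exact hsub ▸ hw_li.comp e e.injective

end Matrix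

theorem finrank_span_range_comp_le {ι R K L n : Type*} [CommRing R] [Field K] [Field L]
    [Fintype n] (f : R →+* K) (g : R →+* L) (hfg : ∀ a, g a ≠ 0 → f a ≠ 0) (v : ι → n → R) :
    finrank L (span L (range fun i => g ∘ v i)) ≤
      finrank K (span K (range fun i => f ∘ v i)) := by
  obtain ⟨w, hw_mem, -, hw_li⟩ := exists_fun_fin_finrank_span_eq L (range fun i => g ∘ v i)
  choose a ha using hw_mem
  let B : Matrix _ n R := fun k => v (a k)
  have hBg : LinearIndependent L (B.map g).row := by
    have hrow : (B.map g).row = w := funext ha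
    exact hrow ▸ hw_li
  obtain ⟨c, hc⟩ := exists_isUnit_det_submatrix_of_linearIndependent_row hBg
  -- the minor `det (B.submatrix id c)` is nonzero at `g`, hence also at `f`
  have hBf : LinearIndependent K (B.map f).row := by
    refine linearIndependent_row_of_isUnit_det_submatrix c ?_
    rw [isUnit_iff_ne_zero, submatrix_map] at hc ⊢
    rw [← RingHom.mapMatrix_apply, ← RingHom.map_det] at hc ⊢
    exact hfg _ hc
  calc _ = Fintype.card _ := (Fintype.card_fin _).symm
    _ ≤ finrank K (span K (range (B.map f).row)) :=
      linearIndependent_iff_card_le_finrank_span.1 hBf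
    _ ≤ _ := Submodule.finrank_mono (span_mono (range_comp_subset_range a fun i => f ∘ v i))

section FixedVectors

variable {H : Type*} {d : ℕ}

def fixedVectorEquations {R : Type*} [CommRing R] (M : H → Matrix (Fin d) (Fin d) R) :
    H × Fin d → Fin d → R :=
  fun q => (M q.1 - 1).row q.2

theorem fixedVectorEquations_map {R S : Type*} [CommRing R] [CommRing S] (φ : R →+* S)
    (M : H → Matrix (Fin d) (Fin d) R) :
    fixedVectorEquations (fun h => (M h).map φ) = fun q => φ ∘ fixedVectorEquations M q := by
  funext q
  simp only [fixedVectorEquations, ← φ.mapMatrix_apply, ← map_one φ.mapMatrix, ← map_sub]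
  rfl

theorem fixedVectors_eq_dualCoannihilator {K : Type*} [Field K]
    (M : H → Matrix (Fin d) (Fin d) K) :
    fixedVectors M =
      (span K (range (dotProductEquiv K (Fin d) ∘ fixedVectorEquations M))).dualCoannihilator := by
  ext v
  rw [← SetLike.mem_coe (x := v) (p := Submodule.dualCoannihilator _), coe_dualCoannihilator_span]
  simp only [forall_mem_range, Prod.forall, mem_ofPred_eq, Function.comp_apply,
    dotProductEquiv_apply_apply]
  refine forall_congr' fun h => ?_
  have hsub : M h *ᵥ v - v = (M h - 1) *ᵥ v := by rw [sub_mulVec, one_mulVec]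
  rw [← sub_eq_zero, hsub, funext_iff]
  rfl

theorem finrank_fixedVectors {K : Type*} [Field K] (M : H → Matrix (Fin d) (Fin d) K) :
    finrank K (fixedVectors M) = d - finrank K (span K (range (fixedVectorEquations M))) := by
  have hdim := Subspace.finrank_add_finrank_dualCoannihilator_eq
    (span K (range (dotProductEquiv K (Fin d) ∘ fixedVectorEquations M)))
  rw [← fixedVectors_eq_dualCoannihilator, range_comp, ← LinearEquiv.coe_coe, span_image,
    LinearEquiv.finrank_map_eq, finrank_fin_fun] at hdim
  omega

theorem finrank_fixedVectors_map_le {R K L : Type*} [CommRing R] [Field K] [Field L]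
    (f : R →+* K) (g : R →+* L) (hfg : ∀ a, g a ≠ 0 → f a ≠ 0)
    (M : H → Matrix (Fin d) (Fin d) R) :
    finrank K (fixedVectors fun h => (M h).map f) ≤
      finrank L (fixedVectors fun h => (M h).map g) := by
  rw [finrank_fixedVectors, finrank_fixedVectors, fixedVectorEquations_map,
    fixedVectorEquations_map]
  exact Nat.sub_le_sub_left (finrank_span_range_comp_le f g hfg _) d

end FixedVectors

theorem AlgebraicGeometry.Scheme.Γevaluation_ne_zero_of_specializes {X : Scheme} {x y : X}
    (h : x ⤳ y) {a : Γ(X, ⊤)} (ha : X.Γevaluation y a ≠ 0) : X.Γevaluation x a ≠ 0 :=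
  (X.Γevaluation_ne_zero_iff_mem_basicOpen x a).2 <|
    h.mem_open (X.toRingedSpace.basicOpen a).isOpen
      ((X.Γevaluation_ne_zero_iff_mem_basicOpen y a).1 ha)

theorem finrank_fixedVectors_le_of_specializes_general
    (X : Scheme) (H : Type*) [Group H] (d : ℕ)
    (ρ : H →* Matrix.GeneralLinearGroup (Fin d) Γ(X, ⊤))
    (x y : X) (hxy : y ∈ closure ({x} : Set X)) :
    Module.finrank (X.residueField x)
      (fixedVectors fun h : H =>
        (ρ h : Matrix (Fin d) (Fin d) Γ(X, ⊤)).map (X.Γevaluation x)) ≤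
    Module.finrank (X.residueField y)
      (fixedVectors fun h : H =>
        (ρ h : Matrix (Fin d) (Fin d) Γ(X, ⊤)).map (X.Γevaluation y)) :=
  finrank_fixedVectors_map_le (X.Γevaluation x).hom (X.Γevaluation y).hom
    (fun _ => Scheme.Γevaluation_ne_zero_of_specializes (specializes_iff_mem_closure.2 hxy))
    fun h => (ρ h : Matrix (Fin d) (Fin d) Γ(X, ⊤))

/-- For a group homomorphism `ρ : H → GL_d(Γ(X, O_X))` over a scheme `X`, the dimension of the
space of `H`-invariants of the fiber can only grow under specialization: if `y` lies in the
closure of `{x}` then `r x ≤ r y`. -/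
theorem finrank_fixedVectors_le_of_specializes
    (X : Scheme) (H : Type*) [Group H] (d : ℕ) (hd : 1 ≤ d)
    (ρ : H →* Matrix.GeneralLinearGroup (Fin d) Γ(X, ⊤))
    (x y : X) (hxy : y ∈ closure ({x} : Set X)) :
    Module.finrank (X.residueField x)
      (fixedVectors fun h : H =>
        (ρ h : Matrix (Fin d) (Fin d) Γ(X, ⊤)).map (X.Γevaluation x)) ≤
    Module.finrank (X.residueField y)
      (fixedVectors fun h : H =>
        (ρ h : Matrix (Fin d) (Fin d) Γ(X, ⊤)).map (X.Γevaluation y)) :=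
  finrank_fixedVectors_le_of_specializes_general X H d ρ x y hxy
end
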